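/- arXiv:1807.10395 — 4 statements merged into one kernel-verified Lean document; each statement's English description precedes it below -/
import Mathlib

section
/- Let X be a reflexive Banach space (over ℝ or ℂ) and let T ∈ B(X). If the kernel N(T*) of the normed-space adjoint T* is a complemented subspace of X*, then the norm closure of the range R(T) is a complemented subspace of X. (Theorem 3.1(a₂)) -/
/-!
By Hahn–Banach, the closure of `R(T)` is the pre-annihilator `⊥A` of `A = N(T*)`. If
`X* = A ⊕ N` topologically, then `⊥A ∩ ⊥N = ⊥(A + N) = 0` because `X*` separates points, and
`⊥A + ⊥N = X`: reflexivity turns the functional `f ↦ (P f) x`, with `P` the projection onto `A`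
along `N`, into a point `y ∈ X`, and then `x - y ∈ ⊥A` and `y ∈ ⊥N`.
-/

open NormedSpace

/-- A (necessarily closed) subspace `M` of a normed space is *complemented* if it is closed and
there exists a closed subspace `N` with `M + N = X` and `M ∩ N = {0}`. -/
def IsComplementedSubspace {𝕜 X : Type*} [NormedField 𝕜] [NormedAddCommGroup X]
    [NormedSpace 𝕜 X] (M : Submodule 𝕜 X) : Prop :=
  IsClosed (M : Set X) ∧
    ∃ N : Submodule 𝕜 X, IsClosed (N : Set X) ∧ M ⊔ N = ⊤ ∧ M ⊓ N = ⊥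

/-- The normed-space adjoint `T* : X* → X*` of `T : X → X`, given by `(T* f) x = f (T x)`. -/
noncomputable def normedAdjoint {𝕜 X : Type*} [NontriviallyNormedField 𝕜]
    [NormedAddCommGroup X] [NormedSpace 𝕜 X] (T : X →L[𝕜] X) :
    StrongDual 𝕜 X →L[𝕜] StrongDual 𝕜 X :=
  (ContinuousLinearMap.compL 𝕜 X X 𝕜).flip T

section Preannihilator

variable {𝕜 X : Type*} [NontriviallyNormedField 𝕜] [AddCommGroup X] [TopologicalSpace X]
  [Module 𝕜 X]

theorem mem_polarSubmodule_topDualPairing {S : Submodule 𝕜 (StrongDual 𝕜 X)} {x : X} :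
    x ∈ (topDualPairing 𝕜 X).polarSubmodule S ↔ ∀ f ∈ S, f x = 0 := by
  change x ∈ (topDualPairing 𝕜 X).polar S ↔ _
  simp [LinearMap.polar_subMulAction]

theorem isClosed_polarSubmodule_topDualPairing (S : Submodule 𝕜 (StrongDual 𝕜 X)) :
    IsClosed ((topDualPairing 𝕜 X).polarSubmodule S : Set X) := by
  have : ((topDualPairing 𝕜 X).polarSubmodule S : Set X) = ⋂ f ∈ S, f ⁻¹' {0} := by
    ext x
    simp [mem_polarSubmodule_topDualPairing]
  rw [this]
  exact isClosed_biInter fun f _ ↦ isClosed_singleton.preimage f.continuous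

theorem polarSubmodule_topDualPairing_sup (A N : Submodule 𝕜 (StrongDual 𝕜 X)) :
    (topDualPairing 𝕜 X).polarSubmodule (A ⊔ N) =
      (topDualPairing 𝕜 X).polarSubmodule A ⊓ (topDualPairing 𝕜 X).polarSubmodule N := by
  ext x
  simp only [Submodule.mem_inf, mem_polarSubmodule_topDualPairing]
  refine ⟨fun h ↦ ⟨fun f hf ↦ h f (Submodule.mem_sup_left hf),
    fun f hf ↦ h f (Submodule.mem_sup_right hf)⟩, ?_⟩
  rintro ⟨hA, hN⟩ _ hf
  obtain ⟨a, ha, b, hb, rfl⟩ := Submodule.mem_sup.1 hf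
  simp [hA a ha, hN b hb]

theorem polarSubmodule_topDualPairing_top [SeparatingDual 𝕜 X] :
    (topDualPairing 𝕜 X).polarSubmodule (⊤ : Submodule 𝕜 (StrongDual 𝕜 X)) = ⊥ := by
  ext x
  simp [mem_polarSubmodule_topDualPairing, ← SeparatingDual.eq_zero_iff_forall_dual_eq_zero]

end Preannihilator

theorem Submodule.topologicalClosure_eq_polarSubmodule_topDualPairing {𝕜 X : Type*} [RCLike 𝕜]
    [NormedAddCommGroup X] [NormedSpace 𝕜 X] (M : Submodule 𝕜 X) :
    M.topologicalClosure =
      (topDualPairing 𝕜 X).polarSubmodule (StrongDual.polarSubmodule 𝕜 M) := by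
  refine le_antisymm (M.topologicalClosure_minimal (fun x hx ↦ ?_)
    (isClosed_polarSubmodule_topDualPairing _)) fun x hx ↦ ?_
  · exact mem_polarSubmodule_topDualPairing.2 fun f hf ↦
      (StrongDual.mem_polarSubmodule 𝕜 M f).1 hf x hx
  · by_contra hxM
    -- separate `x` from the closure of `M` by a functional on the quotient
    have := M.isClosed_topologicalClosure
    obtain ⟨g, hg⟩ := SeparatingDual.exists_ne_zero (R := 𝕜)
      ((Submodule.Quotient.mk_eq_zero _).not.2 hxM)
    refine hg (mem_polarSubmodule_topDualPairing.1 hx (g ∘L M.topologicalClosure.mkQL) ?_)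
    refine (StrongDual.mem_polarSubmodule 𝕜 M _).2 fun y hy ↦ ?_
    simp [(Submodule.Quotient.mk_eq_zero _).2 (M.le_topologicalClosure hy)]

theorem ker_normedAdjoint {𝕜 X : Type*} [NontriviallyNormedField 𝕜] [NormedAddCommGroup X]
    [NormedSpace 𝕜 X] (T : X →L[𝕜] X) :
    LinearMap.ker (normedAdjoint T : StrongDual 𝕜 X →ₗ[𝕜] StrongDual 𝕜 X) =
      StrongDual.polarSubmodule 𝕜 (LinearMap.range (T : X →ₗ[𝕜] X)) := by
  ext f
  simp only [LinearMap.mem_ker, StrongDual.mem_polarSubmodule, LinearMap.mem_range,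
    forall_exists_index, forall_apply_eq_imp_iff]
  exact ContinuousLinearMap.ext_iff

theorem sup_polarSubmodule_topDualPairing_eq_top {𝕜 X : Type*} [NontriviallyNormedField 𝕜]
    [NormedAddCommGroup X] [NormedSpace 𝕜 X]
    (hrefl : Function.Surjective (inclusionInDoubleDual 𝕜 X))
    {A N : Submodule 𝕜 (StrongDual 𝕜 X)} (h : A.IsTopCompl N) :
    (topDualPairing 𝕜 X).polarSubmodule A ⊔ (topDualPairing 𝕜 X).polarSubmodule N = ⊤ := by
  refine Submodule.eq_top_iff'.2 fun x ↦ ?_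
  obtain ⟨y, hJy⟩ := hrefl (inclusionInDoubleDual 𝕜 X x ∘L A.projectionL N h)
  have hy : ∀ f, f y = A.projectionL N h f x := fun f ↦ DFunLike.congr_fun hJy f
  have hxy : x - y ∈ (topDualPairing 𝕜 X).polarSubmodule A :=
    mem_polarSubmodule_topDualPairing.2 fun f hf ↦ by
      rw [map_sub, hy, A.projectionL_apply_left h ⟨f, hf⟩, sub_self]
  have hyN : y ∈ (topDualPairing 𝕜 X).polarSubmodule N :=
    mem_polarSubmodule_topDualPairing.2 fun f hf ↦ by
      rw [hy, A.projectionL_apply_right h ⟨f, hf⟩, zero_apply]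
  simpa using Submodule.add_mem_sup hxy hyN

theorem IsComplementedSubspace.polarSubmodule_topDualPairing {𝕜 X : Type*} [RCLike 𝕜]
    [NormedAddCommGroup X] [NormedSpace 𝕜 X]
    (hrefl : Function.Surjective (inclusionInDoubleDual 𝕜 X))
    {A : Submodule 𝕜 (StrongDual 𝕜 X)} (hA : IsComplementedSubspace A) :
    IsComplementedSubspace ((topDualPairing 𝕜 X).polarSubmodule A) := by
  obtain ⟨hA, N, hN, hsup, hinf⟩ := hA
  have hAN : A.IsTopCompl N :=
    Submodule.IsCompl.isTopCompl_of_isClosed ⟨disjoint_iff.2 hinf, codisjoint_iff.2 hsup⟩ hA hN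
  refine ⟨isClosed_polarSubmodule_topDualPairing A, _, isClosed_polarSubmodule_topDualPairing N,
    sup_polarSubmodule_topDualPairing_eq_top hrefl hAN, ?_⟩
  rw [← polarSubmodule_topDualPairing_sup, hsup, polarSubmodule_topDualPairing_top]

theorem ker_adjoint_complemented_implies_range_closure_complemented_general
    {𝕜 X : Type*} [RCLike 𝕜] [NormedAddCommGroup X] [NormedSpace 𝕜 X]
    (hrefl : Function.Surjective (inclusionInDoubleDual 𝕜 X))
    (T : X →L[𝕜] X)
    (h : IsComplementedSubspace (LinearMap.ker (normedAdjoint T : StrongDual 𝕜 X →ₗ[𝕜] StrongDual 𝕜 X))) :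
    IsComplementedSubspace (LinearMap.range (T : X →ₗ[𝕜] X)).topologicalClosure := by
  rw [Submodule.topologicalClosure_eq_polarSubmodule_topDualPairing, ← ker_normedAdjoint]
  exact h.polarSubmodule_topDualPairing hrefl

/-- Theorem 3.1(a₂): if `X` is reflexive and the kernel of `T*` is complemented in `X*`,
then the closure of the range of `T` is complemented in `X`. -/
theorem ker_adjoint_complemented_implies_range_closure_complemented
    {𝕜 X : Type*} [RCLike 𝕜] [NormedAddCommGroup X] [NormedSpace 𝕜 X] [CompleteSpace X]
    (hrefl : Function.Surjective (inclusionInDoubleDual 𝕜 X))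
    (T : X →L[𝕜] X)
    (h : IsComplementedSubspace (LinearMap.ker (normedAdjoint T : StrongDual 𝕜 X →ₗ[𝕜] StrongDual 𝕜 X))) :
    IsComplementedSubspace (LinearMap.range (T : X →ₗ[𝕜] X)).topologicalClosure :=
  ker_adjoint_complemented_implies_range_closure_complemented_general hrefl T h
end

section
/- Let X be a reflexive Banach space (over ℝ or ℂ) and let T ∈ B(X). If the norm closure of the range R(T*) of the normed-space adjoint T* is a complemented subspace of X*, then the kernel N(T) is a complemented subspace of X. (Theorem 3.1(b₁)) -/
open NormedSpace

/-!
Let `M` be the closure of `R(T*)` and `P` a bounded projection of `X*` onto `M`. Reflexivity makes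
every operator on `X*` an adjoint, so `P = Q*` for some `Q ∈ B(X)`, which is idempotent because
`T ↦ T*` is injective and reverses products. The kernel of any operator is the pre-annihilator of
the closure of the range of its adjoint, and `R(Q*) = M`, so `N(Q) = N(T)`; the kernel of a bounded
idempotent is complemented by its range.
-/

section Complemented

variable {𝕜 E : Type*} [NontriviallyNormedField 𝕜] [NormedAddCommGroup E] [NormedSpace 𝕜 E]

theorem Submodule.IsTopCompl.isComplementedSubspace {p q : Submodule 𝕜 E} (h : p.IsTopCompl q) :
    IsComplementedSubspace p :=
  ⟨h.isClosed, q, h.isClosed', h.isCompl.sup_eq_top, h.isCompl.inf_eq_bot⟩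

theorem IsComplementedSubspace.exists_isTopCompl [CompleteSpace E] {p : Submodule 𝕜 E}
    (h : IsComplementedSubspace p) : ∃ q : Submodule 𝕜 E, p.IsTopCompl q := by
  obtain ⟨hp, q, hq, hsup, hinf⟩ := h
  exact ⟨q, Submodule.IsCompl.isTopCompl_of_isClosed
    ⟨disjoint_iff.mpr hinf, codisjoint_iff.mpr hsup⟩ hp hq⟩

end Complemented

section NormedAdjoint

variable {𝕜 X : Type*} [NontriviallyNormedField 𝕜] [NormedAddCommGroup X] [NormedSpace 𝕜 X]

theorem normedAdjoint_mul (S T : X →L[𝕜] X) :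
    normedAdjoint (S * T) = normedAdjoint T * normedAdjoint S :=
  rfl

theorem normedAdjoint_injective [SeparatingDual 𝕜 X] :
    Function.Injective (normedAdjoint : (X →L[𝕜] X) → StrongDual 𝕜 X →L[𝕜] StrongDual 𝕜 X) := by
  intro S T h
  ext x
  refine (SeparatingDual.eq_iff_forall_dual_eq (R := 𝕜)).mpr fun f => ?_
  exact congr($h f x)

theorem IsIdempotentElem.of_normedAdjoint [SeparatingDual 𝕜 X] {T : X →L[𝕜] X}
    (h : IsIdempotentElem (normedAdjoint T)) : IsIdempotentElem T :=
  normedAdjoint_injective ((normedAdjoint_mul T T).trans h)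

theorem mem_ker_iff_closure_range_normedAdjoint_le [SeparatingDual 𝕜 X] (T : X →L[𝕜] X) (x : X) :
    x ∈ LinearMap.ker (T : X →ₗ[𝕜] X) ↔
      (LinearMap.range (normedAdjoint T : StrongDual 𝕜 X →ₗ[𝕜] StrongDual 𝕜 X)).topologicalClosure
        ≤ LinearMap.ker (inclusionInDoubleDual 𝕜 X x : StrongDual 𝕜 X →ₗ[𝕜] 𝕜) := by
  constructor
  · intro hx
    refine Submodule.topologicalClosure_minimal _ ?_ (ContinuousLinearMap.isClosed_ker _)
    rintro _ ⟨f, rfl⟩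
    exact (congrArg f hx).trans f.map_zero
  · intro h
    exact SeparatingDual.eq_zero_of_forall_dual_eq_zero fun f =>
      h (Submodule.le_topologicalClosure _ ⟨f, rfl⟩)

theorem ker_eq_of_closure_range_normedAdjoint_eq [SeparatingDual 𝕜 X] {S T : X →L[𝕜] X}
    (h : (LinearMap.range (normedAdjoint S : StrongDual 𝕜 X →ₗ[𝕜] StrongDual 𝕜 X)).topologicalClosure
      = (LinearMap.range (normedAdjoint T : StrongDual 𝕜 X →ₗ[𝕜] StrongDual 𝕜 X)).topologicalClosure) :
    LinearMap.ker (S : X →ₗ[𝕜] X) = LinearMap.ker (T : X →ₗ[𝕜] X) := by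
  ext x
  rw [mem_ker_iff_closure_range_normedAdjoint_le, mem_ker_iff_closure_range_normedAdjoint_le, h]

end NormedAdjoint

theorem exists_normedAdjoint_eq_of_surjective_inclusionInDoubleDual {𝕜 X : Type*} [RCLike 𝕜]
    [NormedAddCommGroup X] [NormedSpace 𝕜 X]
    (hrefl : Function.Surjective (inclusionInDoubleDual 𝕜 X))
    (P : StrongDual 𝕜 X →L[𝕜] StrongDual 𝕜 X) : ∃ Q : X →L[𝕜] X, normedAdjoint Q = P := by
  let e := LinearIsometryEquiv.ofSurjective (inclusionInDoubleDualLi 𝕜 (E := X)) hrefl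
  refine ⟨(e.symm : _ →L[𝕜] X) ∘L normedAdjoint P ∘L (e : X →L[𝕜] _), ?_⟩
  ext f x
  calc f (e.symm (normedAdjoint P (e x))) = e (e.symm (normedAdjoint P (e x))) f := rfl
    _ = P f x := by rw [e.apply_symm_apply]; rfl

theorem range_closure_adjoint_complemented_implies_ker_complemented_general
    {𝕜 X : Type*} [RCLike 𝕜] [NormedAddCommGroup X] [NormedSpace 𝕜 X]
    (hrefl : Function.Surjective (inclusionInDoubleDual 𝕜 X))
    (T : X →L[𝕜] X)
    (h : IsComplementedSubspace (LinearMap.range (normedAdjoint T : StrongDual 𝕜 X →ₗ[𝕜] StrongDual 𝕜 X)).topologicalClosure) :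
    IsComplementedSubspace (LinearMap.ker (T : X →ₗ[𝕜] X)) := by
  obtain ⟨N, hMN⟩ := h.exists_isTopCompl
  obtain ⟨Q, hQ⟩ := exists_normedAdjoint_eq_of_surjective_inclusionInDoubleDual hrefl
    (Submodule.projectionL _ N hMN)
  have hQ_idem : IsIdempotentElem Q :=
    .of_normedAdjoint (hQ ▸ Submodule.isIdempotentElem_projectionL hMN)
  have hker : LinearMap.ker (Q : X →ₗ[𝕜] X) = LinearMap.ker (T : X →ₗ[𝕜] X) := by
    refine ker_eq_of_closure_range_normedAdjoint_eq ?_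
    rw [hQ, Submodule.range_projectionL,
      (Submodule.isClosed_topologicalClosure _).submodule_topologicalClosure_eq]
  rw [← hker]
  exact (ContinuousLinearMap.IsIdempotentElem.isTopCompl hQ_idem).symm.isComplementedSubspace

/-- Theorem 3.1(b₁): if `X` is reflexive and the closure of the range of `T*` is
complemented in `X*`, then the kernel of `T` is complemented in `X`. -/
theorem range_closure_adjoint_complemented_implies_ker_complemented
    {𝕜 X : Type*} [RCLike 𝕜] [NormedAddCommGroup X] [NormedSpace 𝕜 X] [CompleteSpace X]
    (hrefl : Function.Surjective (inclusionInDoubleDual 𝕜 X))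
    (T : X →L[𝕜] X)
    (h : IsComplementedSubspace (LinearMap.range (normedAdjoint T : StrongDual 𝕜 X →ₗ[𝕜] StrongDual 𝕜 X)).topologicalClosure) :
    IsComplementedSubspace (LinearMap.ker (T : X →ₗ[𝕜] X)) :=
  range_closure_adjoint_complemented_implies_ker_complemented_general hrefl T h
end

section
/- Let X be a Banach space (over ℝ or ℂ) and let U and V be weak*-closed subspaces of the dual X* with U + V = X* and U ∩ V = {0}. Then the pre-annihilators satisfy ^⊥U + ^⊥V = X and ^⊥U ∩ ^⊥V = {0}; in particular ^⊥U is a complemented subspace of X with complement ^⊥V. (Lemma 4.2(b)) -/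
/-!
Since `U + V = X*`, a vector annihilated by both `U` and `V` is annihilated by all of `X*`, so
`^⊥U ∩ ^⊥V = 0`. For the sum, let `P` be the projection of `X*` onto `V` along `U`; it is bounded
because `U` and `V` are closed in the Banach space `X*`. For `a ∈ ^⊥U`, `b ∈ ^⊥V` and `f ∈ X*` we
have `f a = (P f) (a + b)`, hence `‖a‖ ≤ ‖P‖ ‖a + b‖`, and completeness of `X` makes `^⊥U + ^⊥V`
closed. A functional vanishing on this sum lies in both `U` and `V` (a weak*-closed subspace is the
annihilator of its pre-annihilator), hence is zero, so by Hahn–Banach the sum is all of `X`.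
-/

open NormedSpace

/-- A set of functionals is weak*-closed if it is closed in the weak* topology of `X*`. -/
def IsWeakStarClosed {𝕜 X : Type*} [NontriviallyNormedField 𝕜] [NormedAddCommGroup X]
    [NormedSpace 𝕜 X] (U : Set (StrongDual 𝕜 X)) : Prop :=
  IsClosed (StrongDual.toWeakDual '' U)

/-- A subspace `U` of `X*` is weak* complemented if it is weak*-closed and there is a
weak*-closed subspace `V` of `X*` with `U + V = X*` and `U ∩ V = {0}`. -/
def IsWeakStarComplemented {𝕜 X : Type*} [NontriviallyNormedField 𝕜] [NormedAddCommGroup X]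
    [NormedSpace 𝕜 X] (U : Submodule 𝕜 (StrongDual 𝕜 X)) : Prop :=
  IsWeakStarClosed (U : Set (StrongDual 𝕜 X)) ∧
    ∃ V : Submodule 𝕜 (StrongDual 𝕜 X), IsWeakStarClosed (V : Set (StrongDual 𝕜 X)) ∧
      U ⊔ V = ⊤ ∧ U ⊓ V = ⊥

/-- The pre-annihilator `^⊥B = {x ∈ X : f(x) = 0 for all f ∈ B}` of a subspace of `X*`. -/
def preAnnihilator {𝕜 X : Type*} [NontriviallyNormedField 𝕜] [NormedAddCommGroup X]
    [NormedSpace 𝕜 X] (B : Submodule 𝕜 (StrongDual 𝕜 X)) : Submodule 𝕜 X where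
  carrier := {x | ∀ f ∈ B, f x = 0}
  add_mem' := by intro a b ha hb f hf; simp [ha f hf, hb f hf]
  zero_mem' := by intro f hf; simp
  smul_mem' := by intro c a ha f hf; simp [ha f hf]

open Topology

open Module in
theorem Submodule.exists_forall_apply_eq_zero_of_domRestrict_notMem
    {K V : Type*} [Field K] [AddCommGroup V] [Module K V]
    (S : Submodule K V) [FiniteDimensional K S] {U : Submodule K (Dual K V)} {f : Dual K V}
    (hf : f.domRestrict S ∉ U.map (LinearMap.domRestrict' S)) :
    ∃ y ∈ S, (∀ g ∈ U, g y = 0) ∧ f y ≠ 0 := by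
  rw [← Subspace.dualCoannihilator_dualAnnihilator_eq (W := U.map (LinearMap.domRestrict' S)),
    Submodule.mem_dualAnnihilator] at hf
  push Not at hf
  obtain ⟨y, hy, hfy⟩ := hf
  exact ⟨y, y.2, fun g hg => (Submodule.mem_dualCoannihilator _).mp hy _ ⟨g, hg, rfl⟩, hfy⟩

section NontriviallyNormedField

variable {𝕜 X : Type*} [NontriviallyNormedField 𝕜] [NormedAddCommGroup X] [NormedSpace 𝕜 X]

theorem mem_preAnnihilator {B : Submodule 𝕜 (StrongDual 𝕜 X)} {x : X} :
    x ∈ preAnnihilator B ↔ ∀ f ∈ B, f x = 0 :=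
  Iff.rfl

theorem isClosed_preAnnihilator (B : Submodule 𝕜 (StrongDual 𝕜 X)) :
    IsClosed (preAnnihilator B : Set X) := by
  show IsClosed {x | ∀ f ∈ B, f x = 0}
  simp only [Set.ofPred_forall]
  exact isClosed_biInter fun f _ => isClosed_eq f.continuous continuous_const

theorem preAnnihilator_sup (U V : Submodule 𝕜 (StrongDual 𝕜 X)) :
    preAnnihilator (U ⊔ V) = preAnnihilator U ⊓ preAnnihilator V := by
  ext x
  simp only [Submodule.mem_inf, mem_preAnnihilator]
  refine ⟨fun h => ⟨fun f hf => h f (Submodule.mem_sup_left hf),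
    fun f hf => h f (Submodule.mem_sup_right hf)⟩, fun ⟨hU, hV⟩ f hf => ?_⟩
  obtain ⟨u, hu, v, hv, rfl⟩ := Submodule.mem_sup.mp hf
  rw [add_apply, hU u hu, hV v hv, add_zero]

theorem preAnnihilator_top [SeparatingDual 𝕜 X] :
    preAnnihilator (⊤ : Submodule 𝕜 (StrongDual 𝕜 X)) = ⊥ :=
  (Submodule.eq_bot_iff _).mpr fun _ hx =>
    SeparatingDual.eq_zero_of_forall_dual_eq_zero fun f => hx f Submodule.mem_top

theorem IsWeakStarClosed.isClosed {U : Set (StrongDual 𝕜 X)} (hU : IsWeakStarClosed U) :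
    IsClosed U := by
  rw [← Set.preimage_image_eq U StrongDual.toWeakDual.injective]
  exact hU.preimage NormedSpace.Dual.toWeakDual_continuous

theorem IsWeakStarClosed.exists_finset_forall_exists_apply_ne {U : Set (StrongDual 𝕜 X)}
    (hU : IsWeakStarClosed U) {f : StrongDual 𝕜 X} (hf : f ∉ U) :
    ∃ I : Finset X, ∀ g ∈ U, ∃ x ∈ I, g x ≠ f x := by
  have hnhds : (StrongDual.toWeakDual '' U)ᶜ ∈ 𝓝 (StrongDual.toWeakDual f) :=
    hU.isOpen_compl.mem_nhds fun ⟨g, hg, hgf⟩ => hf (StrongDual.toWeakDual.injective hgf ▸ hg)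
  have hemb : IsEmbedding fun (φ : WeakDual 𝕜 X) (x : X) => φ x :=
    WeakBilin.isEmbedding ContinuousLinearMap.coe_injective
  rw [hemb.nhds_eq_comap, nhds_pi, Filter.mem_comap] at hnhds
  obtain ⟨t, ht, hsub⟩ := hnhds
  obtain ⟨I, s, hs, hIs⟩ := Filter.mem_pi'.mp ht
  refine ⟨I, fun g hg => ?_⟩
  by_contra! hagree
  refine hsub (hIs fun x hx => ?_) ⟨g, hg, rfl⟩
  simpa [hagree x hx] using mem_of_mem_nhds (hs x)

theorem IsWeakStarClosed.mem_of_forall_preAnnihilator_apply_eq_zero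
    {U : Submodule 𝕜 (StrongDual 𝕜 X)} (hU : IsWeakStarClosed (U : Set (StrongDual 𝕜 X)))
    {f : StrongDual 𝕜 X} (hf : ∀ x ∈ preAnnihilator U, f x = 0) : f ∈ U := by
  by_contra hfU
  obtain ⟨I, hI⟩ := hU.exists_finset_forall_exists_apply_ne hfU
  let S := Submodule.span 𝕜 (I : Set X)
  have hfS : (f : X →ₗ[𝕜] 𝕜).domRestrict S ∉
      (U.map (ContinuousLinearMap.coeLM 𝕜)).map (LinearMap.domRestrict' S) := by
    rintro ⟨_, ⟨g, hg, rfl⟩, hgf⟩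
    obtain ⟨x, hx, hne⟩ := hI g hg
    exact hne (LinearMap.congr_fun hgf ⟨x, Submodule.subset_span hx⟩)
  obtain ⟨y, -, hyU, hfy⟩ := S.exists_forall_apply_eq_zero_of_domRestrict_notMem hfS
  exact hfy (hf y fun g hg => hyU g ⟨g, hg, rfl⟩)

end NontriviallyNormedField

theorem Submodule.isClosed_sup_of_norm_le {𝕜 X : Type*} [NormedField 𝕜]
    [NormedAddCommGroup X] [NormedSpace 𝕜 X] [CompleteSpace X] {M N : Submodule 𝕜 X}
    (hM : IsClosed (M : Set X)) (hN : IsClosed (N : Set X)) (C : ℝ)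
    (hC : ∀ a ∈ M, ∀ b ∈ N, ‖a‖ ≤ C * ‖a + b‖) :
    IsClosed ((M ⊔ N : Submodule 𝕜 X) : Set X) := by
  have := hM.completeSpace_coe
  have := hN.completeSpace_coe
  let σ : (M × N) →L[𝕜] X := M.subtypeL.coprod N.subtypeL
  have hσ : AntilipschitzWith (C.toNNReal + 1) σ := σ.antilipschitz_of_bound fun ⟨a, b⟩ => by
    have ha := (hC a a.2 b b.2).trans
      (mul_le_mul_of_nonneg_right C.le_coe_toNNReal (norm_nonneg ((a : X) + b)))
    have hb : ‖(b : X)‖ ≤ ‖(a : X) + b‖ + ‖(a : X)‖ := by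
      simpa using norm_sub_le ((a : X) + b) a
    change max ‖(a : X)‖ ‖(b : X)‖ ≤ ((C.toNNReal : ℝ) + 1) * ‖(a : X) + b‖
    refine max_le ?_ ?_ <;> nlinarith [norm_nonneg ((a : X) + b)]
  have hrange : LinearMap.range (σ : M × N →ₗ[𝕜] X) = M ⊔ N := by
    simp [σ, LinearMap.range_coprod]
  rw [← hrange, LinearMap.coe_range]
  exact hσ.isClosed_range σ.uniformContinuous

section RCLike

variable {𝕜 X : Type*} [RCLike 𝕜] [NormedAddCommGroup X] [NormedSpace 𝕜 X]

theorem Submodule.exists_strongDual_forall_apply_eq_zero_of_notMem {W : Submodule 𝕜 X}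
    (hW : IsClosed (W : Set X)) {x : X} (hx : x ∉ W) :
    ∃ φ : StrongDual 𝕜 X, (∀ w ∈ W, φ w = 0) ∧ φ x ≠ 0 := by
  -- makes `X ⧸ W` a normed space, hence one with a separating dual
  have : IsClosed (W : Set X) := hW
  have hmk : W.mkQL x ≠ 0 := by simpa using hx
  obtain ⟨g, hg⟩ := SeparatingDual.exists_ne_zero (R := 𝕜) hmk
  refine ⟨g.comp W.mkQL, fun w hw => ?_, hg⟩
  change g (Submodule.Quotient.mk w) = 0
  rw [(Submodule.Quotient.mk_eq_zero W).mpr hw, map_zero]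

theorem norm_le_norm_projectionL_mul_norm_add {U V : Submodule 𝕜 (StrongDual 𝕜 X)}
    (h : V.IsTopCompl U) {a b : X} (ha : a ∈ preAnnihilator U) (hb : b ∈ preAnnihilator V) :
    ‖a‖ ≤ ‖V.projectionL U h‖ * ‖a + b‖ := by
  set P := V.projectionL U h
  refine norm_le_dual_bound 𝕜 a (by positivity) fun f => ?_
  have hfa : f a = P f (a + b) := by
    have hfU : f - P f ∈ U := by
      rw [← V.projectionL_eq_self_sub_projectionL h f]
      exact U.projectionL_apply_mem h.symm f
    rw [map_add, hb _ (V.projectionL_apply_mem h f), add_zero, ← sub_eq_zero]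
    exact ha _ hfU
  calc ‖f a‖ = ‖P f (a + b)‖ := by rw [hfa]
    _ ≤ ‖P f‖ * ‖a + b‖ := (P f).le_opNorm _
    _ ≤ ‖P‖ * ‖f‖ * ‖a + b‖ := by gcongr; exact P.le_opNorm f
    _ = ‖P‖ * ‖a + b‖ * ‖f‖ := by ring

theorem preAnnihilator_sup_preAnnihilator_eq_top_of_isClosed
    {U V : Submodule 𝕜 (StrongDual 𝕜 X)} (hU : IsWeakStarClosed (U : Set (StrongDual 𝕜 X)))
    (hV : IsWeakStarClosed (V : Set (StrongDual 𝕜 X))) (hinf : U ⊓ V = ⊥)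
    (hclosed : IsClosed ((preAnnihilator U ⊔ preAnnihilator V : Submodule 𝕜 X) : Set X)) :
    preAnnihilator U ⊔ preAnnihilator V = ⊤ := by
  refine Submodule.eq_top_iff'.mpr fun x => ?_
  by_contra hx
  obtain ⟨φ, hφ, hφx⟩ := Submodule.exists_strongDual_forall_apply_eq_zero_of_notMem hclosed hx
  have hφU : φ ∈ U := hU.mem_of_forall_preAnnihilator_apply_eq_zero fun y hy =>
    hφ y (Submodule.mem_sup_left hy)
  have hφV : φ ∈ V := hV.mem_of_forall_preAnnihilator_apply_eq_zero fun y hy =>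
    hφ y (Submodule.mem_sup_right hy)
  have hφ0 : φ = 0 := by simpa [hinf] using Submodule.mem_inf.mpr ⟨hφU, hφV⟩
  exact hφx (by simp [hφ0])

end RCLike

/-- Lemma 4.2(b): if `U` and `V` are complementary weak*-closed subspaces of `X*`, then the
pre-annihilators `^⊥U` and `^⊥V` are complementary subspaces of `X`; in particular `^⊥U` is
complemented in `X`. -/
theorem preAnnihilator_complemented_of_weakStar_complemented
    {𝕜 X : Type*} [RCLike 𝕜] [NormedAddCommGroup X] [NormedSpace 𝕜 X] [CompleteSpace X]
    (U V : Submodule 𝕜 (StrongDual 𝕜 X))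
    (hU : IsWeakStarClosed (U : Set (StrongDual 𝕜 X))) (hV : IsWeakStarClosed (V : Set (StrongDual 𝕜 X)))
    (hsup : U ⊔ V = ⊤) (hinf : U ⊓ V = ⊥) :
    preAnnihilator U ⊔ preAnnihilator V = ⊤ ∧ preAnnihilator U ⊓ preAnnihilator V = ⊥ ∧
      IsComplementedSubspace (preAnnihilator U) := by
  have hcompl : V.IsTopCompl U := Submodule.IsCompl.isTopCompl_of_isClosed
    (IsCompl.of_eq hinf hsup).symm hV.isClosed hU.isClosed
  have hinf' : preAnnihilator U ⊓ preAnnihilator V = ⊥ := by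
    rw [← preAnnihilator_sup, hsup, preAnnihilator_top]
  have hclosed := Submodule.isClosed_sup_of_norm_le (isClosed_preAnnihilator U)
    (isClosed_preAnnihilator V) _ fun _ ha _ hb =>
      norm_le_norm_projectionL_mul_norm_add hcompl ha hb
  have hsup' := preAnnihilator_sup_preAnnihilator_eq_top_of_isClosed hU hV hinf hclosed
  exact ⟨hsup', hinf', isClosed_preAnnihilator U, _, isClosed_preAnnihilator V, hsup', hinf'⟩
end

section
/- Let X be a Banach space (over ℝ or ℂ) and let T, K ∈ B(X). If T has closed range R(T) which is a complemented subspace of X, the kernel N(T) is finite dimensional, and K is compact, then: R(T+K) is closed and complemented in X, N(T+K) is complemented in X, and the normed-space adjoint (T+K)* = T* + K* has closed range R(T*+K*) which is complemented in X* and complemented kernel N(T*+K*) in X*. (Corollary 5.3) -/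
open NormedSpace

/-!
Since `ker T` is finite-dimensional and `range T` is complemented, `T` has a generalized inverse
`S` with `T S T = T`. Then `S (T + K) = 1 + C` where `C = S K - (1 - S T)` is compact, because
`1 - S T` has range in `ker T`. By the Riesz theory of `1 + C`, its kernel is finite-dimensional
and its range is closed of finite codimension, so `1 + C` is left invertible on a closed
complement `M` of its kernel. Hence so is `T + K`, and `range (T + K)` is the complemented space
`(T + K) M` plus a finite-dimensional space, hence complemented. So `T + K` has a generalized
inverse `S₀` too, and dualizing `(T + K) S₀ (T + K) = T + K` shows that the range and kernel of
`(T + K)*` are those of the idempotents `(T + K)* S₀*` and `S₀* (T + K)*`.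
-/

theorem isComplementedSubspace_iff_closedComplemented {𝕜 E : Type*} [NontriviallyNormedField 𝕜]
    [NormedAddCommGroup E] [NormedSpace 𝕜 E] [CompleteSpace E] {M : Submodule 𝕜 E} :
    IsComplementedSubspace M ↔ M.ClosedComplemented := by
  rw [Submodule.closedComplemented_iff_isClosed_exists_isClosed_isCompl, IsComplementedSubspace]
  simp only [isCompl_iff, disjoint_iff, codisjoint_iff, and_comm (a := M ⊔ _ = ⊤)]

theorem normedAdjoint_add {𝕜 E : Type*} [NontriviallyNormedField 𝕜] [NormedAddCommGroup E]
    [NormedSpace 𝕜 E] (f g : E →L[𝕜] E) :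
    normedAdjoint (f + g) = normedAdjoint f + normedAdjoint g :=
  map_add _ f g

theorem normedAdjoint_comp_comp_eq_self {𝕜 E : Type*} [NontriviallyNormedField 𝕜]
    [NormedAddCommGroup E] [NormedSpace 𝕜 E] {f g : E →L[𝕜] E} (h : f ∘L g ∘L f = f) :
    normedAdjoint f ∘L normedAdjoint g ∘L normedAdjoint f = normedAdjoint f := by
  ext φ x
  exact congr(φ ($h x))

theorem IsIdempotentElem.add_mul_one_sub {R : Type*} [Ring R] {a b : R} (ha : IsIdempotentElem a)
    (hb : IsIdempotentElem b) (hab : a * b = 0) : IsIdempotentElem (a + b * (1 - a)) := by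
  have hba : (1 - a) * b = b := by rw [sub_mul, one_mul, hab, sub_zero]
  refine ha.add ?_ ?_
  · rw [IsIdempotentElem, mul_assoc, ← mul_assoc (1 - a), hba, ← mul_assoc, hb.eq]
  · rw [← mul_assoc, hab, zero_mul, mul_assoc, ha.one_sub_mul_self, mul_zero, add_zero]

namespace Submodule.ClosedComplemented

variable {𝕜 E : Type*} [RCLike 𝕜] [NormedAddCommGroup E] [NormedSpace 𝕜 E]

/-- If `π` projects onto `p` and `ρ` onto `(1 - π) W`, then `π + ρ (1 - π)` projects onto
`p ⊔ W`. -/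
theorem sup_of_finiteDimensional {p W : Submodule 𝕜 E} (hp : p.ClosedComplemented)
    [FiniteDimensional 𝕜 W] : (p ⊔ W).ClosedComplemented := by
  obtain ⟨π₀, hπ₀⟩ := hp
  set π : E →L[𝕜] E := p.subtypeL ∘L π₀
  have hπp : ∀ y ∈ p, π y = y := fun y hy => congr_arg Subtype.val (hπ₀ ⟨y, hy⟩)
  have hπ : IsIdempotentElem π := ContinuousLinearMap.ext fun x => hπp _ (π₀ x).2
  set W' := W.map ((1 - π : E →L[𝕜] E) : E →ₗ[𝕜] E)
  obtain ⟨ρ₀, hρ₀⟩ := ClosedComplemented.of_finiteDimensional W'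
  set ρ : E →L[𝕜] E := W'.subtypeL ∘L ρ₀
  have hρW' : ∀ y ∈ W', ρ y = y := fun y hy => congr_arg Subtype.val (hρ₀ ⟨y, hy⟩)
  have hρ : IsIdempotentElem ρ := ContinuousLinearMap.ext fun x => hρW' _ (ρ₀ x).2
  have hπρ : π * ρ = 0 := ContinuousLinearMap.ext fun x => by
    obtain ⟨w, -, hw⟩ := (ρ₀ x).2
    change π (ρ₀ x : E) = 0
    rw [← hw]
    exact congr($hπ.mul_one_sub_self w)
  have hP := hπ.add_mul_one_sub hρ hπρ
  suffices (π + ρ * (1 - π)).range = p ⊔ W from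
    this ▸ (ContinuousLinearMap.IsIdempotentElem.isTopCompl hP).closedComplemented
  have hPx : ∀ x, (π + ρ * (1 - π)) x = π x + ρ (x - π x) := fun _ => rfl
  have hW'le : W' ≤ p ⊔ W := by
    rintro - ⟨w, hw, rfl⟩
    exact sub_mem (mem_sup_right hw) (mem_sup_left (π₀ w).2)
  apply le_antisymm
  · rintro - ⟨x, rfl⟩
    change (π + ρ * (1 - π)) x ∈ p ⊔ W
    rw [hPx]
    exact add_mem (mem_sup_left (π₀ x).2) (hW'le (ρ₀ _).2)
  · refine sup_le (fun y hy => ⟨y, ?_⟩) (fun w hw => ⟨w, ?_⟩)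
    · change (π + ρ * (1 - π)) y = y
      rw [hPx, hπp y hy, sub_self, map_zero, add_zero]
    · change (π + ρ * (1 - π)) w = w
      rw [hPx, hρW' (w - π w) ⟨w, hw, rfl⟩, add_sub_cancel]

end Submodule.ClosedComplemented

namespace ContinuousLinearMap

section Ring

variable {R M N : Type*} [Ring R] [TopologicalSpace M] [AddCommGroup M] [Module R M]
  [TopologicalSpace N] [AddCommGroup N] [Module R N]

theorem closedComplemented_range_of_comp_comp_eq_self {f g : M →L[R] M} (h : f ∘L g ∘L f = f) :
    f.range.ClosedComplemented := by
  have hidem : IsIdempotentElem (f ∘L g) := ContinuousLinearMap.ext fun x => congr($h (g x))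
  have hrange : (f ∘L g).range = f.range :=
    le_antisymm (LinearMap.range_comp_le_range _ _) fun _ ⟨x, hx⟩ => ⟨f x, congr($h x).trans hx⟩
  exact hrange ▸ (IsIdempotentElem.isTopCompl hidem).closedComplemented

theorem closedComplemented_ker_of_comp_comp_eq_self [IsTopologicalAddGroup M] {f g : M →L[R] M}
    (h : f ∘L g ∘L f = f) : f.ker.ClosedComplemented := by
  have hidem : IsIdempotentElem (g ∘L f) := ContinuousLinearMap.ext fun x => congr(g ($h x))
  have hker : (g ∘L f).ker = f.ker :=
    le_antisymm (fun x hx => by simpa using congr($h x).symm.trans congr(f $hx))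
      (LinearMap.ker_le_ker_comp _ _)
  exact hker ▸ (IsIdempotentElem.isTopCompl hidem).symm.closedComplemented

theorem range_comp_subtypeL_of_codisjoint_ker {f : M →L[R] N} {p : Submodule R M}
    (h : Codisjoint p f.ker) : (f ∘L p.subtypeL).range = f.range := by
  simpa only [toLinearMap_comp, Submodule.toLinearMap_subtypeL, LinearMap.range_comp,
    Submodule.range_subtype, Submodule.map_eq_range_iff] using h

end Ring

section Banach

variable {𝕜 E F : Type*} [NontriviallyNormedField 𝕜] [NormedAddCommGroup E] [NormedSpace 𝕜 E]
  [CompleteSpace E] [NormedAddCommGroup F] [NormedSpace 𝕜 F] [CompleteSpace F]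

theorem hasLeftInverse_comp_subtypeL {f : E →L[𝕜] F} {M : Submodule 𝕜 E}
    (hM : f.ker.IsTopCompl M) (hrange : f.range.ClosedComplemented) :
    (f ∘L M.subtypeL).HasLeftInverse := by
  have : CompleteSpace M := hM.isClosed'.completeSpace_coe
  have hrange' := range_comp_subtypeL_of_codisjoint_ker hM.isCompl.codisjoint.symm
  have hinj : Function.Injective (f ∘L M.subtypeL) := by
    refine LinearMap.ker_eq_bot.1 ?_
    simpa only [toLinearMap_comp, Submodule.toLinearMap_subtypeL, LinearMap.ker_comp,
      ← Submodule.disjoint_iff_comap_eq_bot] using hM.isCompl.disjoint.symm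
  refine HasLeftInverse.of_injective_of_isClosed_range_of_closedComplement_range hinj ?_
    (hrange' ▸ hrange)
  rw [← range_toLinearMap, ← LinearMap.coe_range, hrange']
  exact hrange.isClosed

theorem exists_comp_comp_eq_self {f : E →L[𝕜] E} (hker : f.ker.ClosedComplemented)
    (hrange : f.range.ClosedComplemented) : ∃ g : E →L[𝕜] E, f ∘L g ∘L f = f := by
  obtain ⟨M, hM⟩ := hker.exists_isTopCompl
  obtain ⟨l, hl⟩ := hasLeftInverse_comp_subtypeL hM hrange
  refine ⟨M.subtypeL ∘L l, ContinuousLinearMap.ext fun x => ?_⟩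
  have hx : x ∈ f.ker ⊔ M := hM.isCompl.sup_eq_top ▸ Submodule.mem_top
  obtain ⟨k, hk, m, hm, rfl⟩ := Submodule.mem_sup.1 hx
  have hfx : f (k + m) = (f ∘L M.subtypeL) ⟨m, hm⟩ := by simp [show f k = 0 from hk]
  change f (M.subtypeL (l (f (k + m)))) = f (k + m)
  rw [hfx, hl]
  rfl

end Banach

section Riesz

variable {𝕜 E : Type*} [NontriviallyNormedField 𝕜] [CompleteSpace 𝕜] [NormedAddCommGroup E]
  [NormedSpace 𝕜 E]

theorem finiteDimensional_ker_of_isCompactOperator_sub_one {D : E →L[𝕜] E}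
    (hD : IsCompactOperator (D - 1 : E →L[𝕜] E)) : FiniteDimensional 𝕜 D.ker := by
  have hmaps : ∀ x ∈ D.ker, ((D - 1 : E →L[𝕜] E) : E →ₗ[𝕜] E) x ∈ D.ker := fun x hx => by
    simp [show D x = 0 from hx]
  have hid : (id : D.ker → D.ker) = -⇑(LinearMap.restrict _ hmaps) := by
    funext x
    ext
    simp
  exact FiniteDimensional.of_isCompactOperator_id (hid ▸ (hD.restrict hmaps D.isClosed_ker).neg)

theorem finiteDimensional_ker_of_isCompactOperator_comp_sub_one {A B : E →L[𝕜] E}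
    (h : IsCompactOperator (A ∘L B - 1 : E →L[𝕜] E)) : FiniteDimensional 𝕜 B.ker :=
  have := finiteDimensional_ker_of_isCompactOperator_sub_one h
  Submodule.finiteDimensional_of_le (S₂ := (A ∘L B).ker) fun x hx => by
    simp [show B x = 0 from hx]

end Riesz

section RCLike

variable {𝕜 E F : Type*} [RCLike 𝕜] [NormedAddCommGroup E] [NormedSpace 𝕜 E]
  [NormedAddCommGroup F] [NormedSpace 𝕜 F]

theorem isCompactOperator_of_finiteDimensional_range (f : E →L[𝕜] F)
    [FiniteDimensional 𝕜 f.range] : IsCompactOperator f :=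
  have : ProperSpace f.range := FiniteDimensional.proper_rclike 𝕜 f.range
  (isCompactOperator_of_locallyCompactSpace_dom f.rangeRestrict).continuous_comp
    continuous_subtype_val

theorem isCompactOperator_comp_add_sub_one {T S K : E →L[𝕜] E} (hS : T ∘L S ∘L T = T)
    [FiniteDimensional 𝕜 T.ker] (hK : IsCompactOperator K) :
    IsCompactOperator (S ∘L (T + K) - 1 : E →L[𝕜] E) := by
  have hdecomp : S ∘L (T + K) - 1 = S ∘L K - (1 - S ∘L T) := by
    rw [comp_add]
    abel
  have : FiniteDimensional 𝕜 (1 - S ∘L T).range :=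
    Submodule.finiteDimensional_of_le (S₂ := T.ker) fun _ ⟨x, hx⟩ => by
      rw [← hx, LinearMap.mem_ker]
      simp [show T (S (T x)) = T x from congr($hS x)]
  rw [hdecomp]
  exact (hK.clm_comp S).sub (isCompactOperator_of_finiteDimensional_range _)

open Filter Topology in
theorem exists_antilipschitzWith_comp_subtypeL_of_isCompactOperator_sub_one {D : E →L[𝕜] E}
    (hD : IsCompactOperator (D - 1 : E →L[𝕜] E)) {M : Submodule 𝕜 E} (hM : IsClosed (M : Set E))
    (hMD : Disjoint M D.ker) : ∃ K, AntilipschitzWith K (D ∘L M.subtypeL) := by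
  by_contra! h
  have hsmall : ∀ n : ℕ, ∃ u : M, ‖u‖ = 1 ∧ ‖D u‖ ≤ 1 / (n + 1) := fun n => by
    by_contra! hn
    refine h (n + 1) (antilipschitz_of_bound_of_norm_one _ fun u hu => ?_)
    have := hn u hu
    rw [div_lt_iff₀ (by positivity)] at this
    rw [comp_apply, Submodule.subtypeL_apply]
    push_cast
    linarith
  choose u hu1 huD using hsmall
  obtain ⟨Q, hQ, hDQ⟩ := hD.image_closedBall_subset_compact 1
  obtain ⟨y, -, φ, hφ, hy⟩ := hQ.tendsto_subseq fun n =>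
    hDQ ⟨(u n : E), by simp [← hu1 n], rfl⟩
  have hDu : Tendsto (fun n => D (u n)) atTop (𝓝 0) :=
    squeeze_zero_norm huD tendsto_one_div_add_atTop_nhds_zero_nat
  -- `u = D u - (D - 1) u`, and both terms converge along `φ`.
  have hu : Tendsto (fun n => (u (φ n) : E)) atTop (𝓝 (-y)) := by
    have := (hDu.comp hφ.tendsto_atTop).sub hy
    simpa [Function.comp_def] using this
  have hyM : -y ∈ M := hM.mem_of_tendsto hu (Eventually.of_forall fun n => (u (φ n)).2)
  have hyker : -y ∈ D.ker :=
    tendsto_nhds_unique ((D.continuous.tendsto _).comp hu) (hDu.comp hφ.tendsto_atTop)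
  have hy1 : ‖-y‖ = 1 :=
    tendsto_nhds_unique hu.norm (by simp only [Submodule.norm_coe, hu1, tendsto_const_nhds])
  have hy0 := hMD.le_bot ⟨hyM, hyker⟩
  rw [Submodule.mem_bot, neg_eq_zero] at hy0
  simp [hy0] at hy1

variable [CompleteSpace E]

theorem isClosed_range_of_isCompactOperator_sub_one {D : E →L[𝕜] E}
    (hD : IsCompactOperator (D - 1 : E →L[𝕜] E)) : IsClosed (D.range : Set E) := by
  have := finiteDimensional_ker_of_isCompactOperator_sub_one hD
  obtain ⟨M, hM⟩ := (Submodule.ClosedComplemented.of_finiteDimensional D.ker).exists_isTopCompl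
  have : CompleteSpace M := hM.isClosed'.completeSpace_coe
  obtain ⟨K, hK⟩ := exists_antilipschitzWith_comp_subtypeL_of_isCompactOperator_sub_one hD
    hM.isClosed' hM.isCompl.disjoint.symm
  rw [← range_comp_subtypeL_of_codisjoint_ker hM.isCompl.codisjoint.symm, LinearMap.coe_range,
    coe_coe]
  exact hK.isClosed_range (D ∘L M.subtypeL).uniformContinuous

theorem finiteDimensional_quotient_range_of_isCompactOperator_sub_one {D : E →L[𝕜] E}
    (hD : IsCompactOperator (D - 1 : E →L[𝕜] E)) : FiniteDimensional 𝕜 (E ⧸ D.range) := by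
  have : IsClosed (D.range : Set E) := isClosed_range_of_isCompactOperator_sub_one hD
  obtain ⟨Q, hQ, hQ0⟩ := hD
  apply FiniteDimensional.of_isCompactOperator_id
  refine ⟨D.range.mkQ '' (-Q), hQ.neg.image continuous_quot_mk, ?_⟩
  have hmk : ∀ x, D.range.mkQ (-(D - 1 : E →L[𝕜] E) x) = D.range.mkQ x := fun x => by
    rw [Submodule.mkQ_apply, Submodule.mkQ_apply, Submodule.Quotient.eq]
    simp
  have := D.range.isOpenMap_mkQ.image_mem_nhds hQ0
  rw [map_zero] at this
  refine Filter.mem_of_superset this ?_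
  rintro - ⟨x, hx, rfl⟩
  exact ⟨_, Set.neg_mem_neg.2 hx, hmk x⟩

theorem closedComplemented_range_of_isCompactOperator_comp_sub_one {A B : E →L[𝕜] E}
    (h : IsCompactOperator (A ∘L B - 1 : E →L[𝕜] E)) : B.range.ClosedComplemented := by
  set D := A ∘L B
  have := finiteDimensional_ker_of_isCompactOperator_sub_one h
  have := finiteDimensional_quotient_range_of_isCompactOperator_sub_one h
  obtain ⟨M, hM⟩ := (Submodule.ClosedComplemented.of_finiteDimensional D.ker).exists_isTopCompl
  obtain ⟨l, hl⟩ := hasLeftInverse_comp_subtypeL hM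
    (.of_finiteDimensional_quotient (isClosed_range_of_isCompactOperator_sub_one h))
  have hBM : (B ∘L M.subtypeL).HasLeftInverse := ⟨l ∘L A, hl⟩
  have hrange : B.range = (B ∘L M.subtypeL).range ⊔ D.ker.map (B : E →ₗ[𝕜] E) := by
    rw [toLinearMap_comp, Submodule.toLinearMap_subtypeL, LinearMap.range_comp,
      Submodule.range_subtype, ← Submodule.map_sup, hM.isCompl.symm.sup_eq_top, Submodule.map_top]
  rw [hrange]
  exact hBM.closedComplemented_range.sup_of_finiteDimensional

end RCLike

end ContinuousLinearMap

theorem compact_perturbation_left_semiFredholm_complemented_general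
    {𝕜 X : Type*} [RCLike 𝕜] [NormedAddCommGroup X] [NormedSpace 𝕜 X] [CompleteSpace X]
    (T K : X →L[𝕜] X)
    (hR : IsComplementedSubspace (LinearMap.range (T : X →ₗ[𝕜] X)))
    (hker : FiniteDimensional 𝕜 (LinearMap.ker (T : X →ₗ[𝕜] X)))
    (hK : IsCompactOperator K) :
    normedAdjoint (T + K) = normedAdjoint T + normedAdjoint K ∧
    IsClosed ((LinearMap.range ((T + K : X →L[𝕜] X) : X →ₗ[𝕜] X) : Submodule 𝕜 X) : Set X) ∧
    IsComplementedSubspace (LinearMap.range ((T + K : X →L[𝕜] X) : X →ₗ[𝕜] X)) ∧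
    IsComplementedSubspace (LinearMap.ker ((T + K : X →L[𝕜] X) : X →ₗ[𝕜] X)) ∧
    IsClosed ((LinearMap.range ((normedAdjoint T + normedAdjoint K :
        StrongDual 𝕜 X →L[𝕜] StrongDual 𝕜 X) : StrongDual 𝕜 X →ₗ[𝕜] StrongDual 𝕜 X) :
        Submodule 𝕜 (StrongDual 𝕜 X)) : Set (StrongDual 𝕜 X)) ∧
    IsComplementedSubspace (LinearMap.range ((normedAdjoint T + normedAdjoint K :
        StrongDual 𝕜 X →L[𝕜] StrongDual 𝕜 X) : StrongDual 𝕜 X →ₗ[𝕜] StrongDual 𝕜 X)) ∧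
    IsComplementedSubspace (LinearMap.ker ((normedAdjoint T + normedAdjoint K :
        StrongDual 𝕜 X →L[𝕜] StrongDual 𝕜 X) : StrongDual 𝕜 X →ₗ[𝕜] StrongDual 𝕜 X)) := by
  obtain ⟨S, hS⟩ := ContinuousLinearMap.exists_comp_comp_eq_self (.of_finiteDimensional T.ker)
    (isComplementedSubspace_iff_closedComplemented.1 hR)
  have hC := ContinuousLinearMap.isCompactOperator_comp_add_sub_one hS hK
  have hker' := ContinuousLinearMap.finiteDimensional_ker_of_isCompactOperator_comp_sub_one hC
  have hrange := ContinuousLinearMap.closedComplemented_range_of_isCompactOperator_comp_sub_one hC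
  obtain ⟨S₀, hS₀⟩ :=
    ContinuousLinearMap.exists_comp_comp_eq_self (.of_finiteDimensional (T + K).ker) hrange
  have hS₀' := normedAdjoint_comp_comp_eq_self hS₀
  rw [normedAdjoint_add] at hS₀'
  have hrange' := ContinuousLinearMap.closedComplemented_range_of_comp_comp_eq_self hS₀'
  simp only [isComplementedSubspace_iff_closedComplemented]
  exact ⟨normedAdjoint_add T K, hrange.isClosed, hrange, .of_finiteDimensional _,
    hrange'.isClosed, hrange', ContinuousLinearMap.closedComplemented_ker_of_comp_comp_eq_self hS₀'⟩

/-- Corollary 5.3: if `T` is left semi-Fredholm (closed complemented range, finite-dimensional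
kernel) and `K` is compact, then `T+K` and its adjoint `(T+K)* = T* + K*` have closed
complemented range and complemented kernel. -/
theorem compact_perturbation_left_semiFredholm_complemented
    {𝕜 X : Type*} [RCLike 𝕜] [NormedAddCommGroup X] [NormedSpace 𝕜 X] [CompleteSpace X]
    (T K : X →L[𝕜] X)
    (hclosed : IsClosed ((LinearMap.range (T : X →ₗ[𝕜] X) : Submodule 𝕜 X) : Set X))
    (hR : IsComplementedSubspace (LinearMap.range (T : X →ₗ[𝕜] X)))
    (hker : FiniteDimensional 𝕜 (LinearMap.ker (T : X →ₗ[𝕜] X)))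
    (hK : IsCompactOperator K) :
    normedAdjoint (T + K) = normedAdjoint T + normedAdjoint K ∧
    IsClosed ((LinearMap.range ((T + K : X →L[𝕜] X) : X →ₗ[𝕜] X) : Submodule 𝕜 X) : Set X) ∧
    IsComplementedSubspace (LinearMap.range ((T + K : X →L[𝕜] X) : X →ₗ[𝕜] X)) ∧
    IsComplementedSubspace (LinearMap.ker ((T + K : X →L[𝕜] X) : X →ₗ[𝕜] X)) ∧
    IsClosed ((LinearMap.range ((normedAdjoint T + normedAdjoint K :
        StrongDual 𝕜 X →L[𝕜] StrongDual 𝕜 X) : StrongDual 𝕜 X →ₗ[𝕜] StrongDual 𝕜 X) :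
        Submodule 𝕜 (StrongDual 𝕜 X)) : Set (StrongDual 𝕜 X)) ∧
    IsComplementedSubspace (LinearMap.range ((normedAdjoint T + normedAdjoint K :
        StrongDual 𝕜 X →L[𝕜] StrongDual 𝕜 X) : StrongDual 𝕜 X →ₗ[𝕜] StrongDual 𝕜 X)) ∧
    IsComplementedSubspace (LinearMap.ker ((normedAdjoint T + normedAdjoint K :
        StrongDual 𝕜 X →L[𝕜] StrongDual 𝕜 X) : StrongDual 𝕜 X →ₗ[𝕜] StrongDual 𝕜 X)) :=
  compact_perturbation_left_semiFredholm_complemented_general T K hR hker hK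
end
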